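/- arXiv:2410.04948 — 2 statements merged into one kernel-verified Lean document; each statement's English description precedes it below -/
import Mathlib

section
/- Let G, H be finite abelian groups, A ⊆ G, B ⊆ H, and t: A → H any function, with P_t = ∪_{a∈A} {a} × (t(a)+B). Suppose there exist nonnegative functions w_A: G → ℝ and w_B: H → ℝ with w_A(0)=1, w_B(0)=1, nonnegative Fourier transforms, and 1_A ∗ w_A = 1_G, 1_B ∗ w_B = 1_H. Then 1_{P_t} ∗ (w_A ⊗ w_B) = 1_{G×H}, and w_A ⊗ w_B is nonnegative with (w_A ⊗ w_B)(0,0)=1 and nonnegative Fourier transform; hence P_t pd-tiles G × H. -/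
open scoped ComplexOrder

/-!
Summing the convolution over `H` first, the fibre of `P_t` above `g ∈ A` is the translate
`t g + B`, which tiles `H` against `w_B` just as `B` does, so the inner sum is `1_A g`; the outer
sum is then the tiling `1_A ∗ w_A = 1_G`. The Fourier transform of `w_A ⊗ w_B` at the character
`(γ, ρ)` is the product of those of `w_A` and `w_B`, hence nonnegative.
-/

section

variable {G H : Type*} [AddCommGroup H]

lemma mem_iUnion_singleton_prod_image_add_iff (A : Set G) (B : Set H) (t : A → H)
    (g : G) (h : H) :
    (g, h) ∈ ⋃ a : A, {(a : G)} ×ˢ ((t a + ·) '' B) ↔ ∃ hg : g ∈ A, h - t ⟨g, hg⟩ ∈ B := by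
  simp only [Set.mem_iUnion, Set.mem_prod, Set.mem_singleton_iff, Set.mem_image]
  constructor
  · rintro ⟨a, rfl, b, hb, rfl⟩
    exact ⟨a.2, by simpa using hb⟩
  · rintro ⟨hg, hb⟩
    exact ⟨⟨g, hg⟩, rfl, _, hb, add_sub_cancel _ _⟩

variable [Fintype H]

lemma sum_indicator_sub_mul_eq_one {B : Set H} {w : H → ℝ}
    (htile : ∀ x : H, ∑ y : H, B.indicator (fun _ => (1 : ℝ)) y * w (x - y) = 1) (c x : H) :
    ∑ y : H, B.indicator (fun _ => (1 : ℝ)) (y - c) * w (x - y) = 1 := by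
  rw [← Equiv.sum_comp (Equiv.addRight c)]
  simp only [Equiv.coe_addRight, add_sub_cancel_right, sub_add_eq_sub_sub_swap]
  exact htile (x - c)

lemma sum_indicator_iUnion_fibre_mul_eq_indicator (A : Set G) {B : Set H} (t : A → H)
    {w : H → ℝ}
    (htile : ∀ x : H, ∑ y : H, B.indicator (fun _ => (1 : ℝ)) y * w (x - y) = 1) (g : G) (x : H) :
    ∑ h : H, (⋃ a : A, {(a : G)} ×ˢ ((t a + ·) '' B)).indicator (fun _ => (1 : ℝ)) (g, h)
        * w (x - h) = A.indicator (fun _ => (1 : ℝ)) g := by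
  by_cases hg : g ∈ A
  · have hfibre : ∀ h : H,
        (⋃ a : A, {(a : G)} ×ˢ ((t a + ·) '' B)).indicator (fun _ => (1 : ℝ)) (g, h)
          = B.indicator (fun _ => (1 : ℝ)) (h - t ⟨g, hg⟩) := fun h => by
      classical
      rw [Set.indicator_apply, Set.indicator_apply, mem_iUnion_singleton_prod_image_add_iff]
      simp only [hg, exists_true_left]
    simp only [hfibre, Set.indicator_of_mem hg]
    exact sum_indicator_sub_mul_eq_one htile _ x
  · have hfibre : ∀ h : H,
        (⋃ a : A, {(a : G)} ×ˢ ((t a + ·) '' B)).indicator (fun _ => (1 : ℝ)) (g, h) = 0 :=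
      fun h => Set.indicator_of_notMem
        (fun hmem => hg ((mem_iUnion_singleton_prod_image_add_iff A B t g h).1 hmem).1) _
    simp only [hfibre, zero_mul, Finset.sum_const_zero, Set.indicator_of_notMem hg]

end

lemma Fintype.sum_prod_mul_mul_mul {α β R : Type*} [Fintype α] [Fintype β] [CommSemiring R]
    (f γ : α → R) (g ρ : β → R) :
    ∑ z : α × β, f z.1 * g z.2 * (γ z.1 * ρ z.2) = (∑ a, f a * γ a) * (∑ b, g b * ρ b) := by
  rw [Finset.sum_mul_sum, Fintype.sum_prod_type]
  exact Finset.sum_congr rfl fun _ _ => Finset.sum_congr rfl fun _ _ => by ring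

/-- If `1_A ∗ w_A = 1_G` and `1_B ∗ w_B = 1_H` are pd-tilings of `G` and `H`, then
for any `t : A → H`, the set `P_t = ⋃_{a ∈ A} {a} × (t a + B)` satisfies
`1_{P_t} ∗ (w_A ⊗ w_B) = 1_{G×H}`, where `w_A ⊗ w_B` is nonnegative, takes the value
`1` at the origin, and has nonnegative Fourier transform; hence `P_t` pd-tiles `G × H`. -/
theorem Pt_pd_tiles
    {G H : Type*} [AddCommGroup G] [AddCommGroup H] [Fintype G] [Fintype H]
    (A : Set G) (B : Set H) (t : A → H)
    (wA : G → ℝ) (wB : H → ℝ)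
    (hwA0 : wA 0 = 1) (hwB0 : wB 0 = 1)
    (hwAnn : ∀ g, 0 ≤ wA g) (hwBnn : ∀ h, 0 ≤ wB h)
    (hwAft : ∀ γ : AddChar G ℂ, 0 ≤ ∑ g : G, (wA g : ℂ) * γ g)
    (hwBft : ∀ ρ : AddChar H ℂ, 0 ≤ ∑ h : H, (wB h : ℂ) * ρ h)
    (htileA : ∀ x : G, ∑ y : G, A.indicator (fun _ => (1 : ℝ)) y * wA (x - y) = 1)
    (htileB : ∀ x : H, ∑ y : H, B.indicator (fun _ => (1 : ℝ)) y * wB (x - y) = 1) :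
    (∀ z : G × H,
      ∑ w : G × H, (⋃ a : A, {(a : G)} ×ˢ ((t a + ·) '' B)).indicator
          (fun _ => (1 : ℝ)) w * (wA (z.1 - w.1) * wB (z.2 - w.2)) = 1) ∧
    (∀ z : G × H, 0 ≤ wA z.1 * wB z.2) ∧
    (wA 0 * wB 0 = 1) ∧
    (∀ (γ : AddChar G ℂ) (ρ : AddChar H ℂ),
      0 ≤ ∑ z : G × H, ((wA z.1 * wB z.2 : ℝ) : ℂ) * (γ z.1 * ρ z.2)) := by
  refine ⟨fun z => ?_, fun z => mul_nonneg (hwAnn z.1) (hwBnn z.2), by rw [hwA0, hwB0, mul_one],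
    fun γ ρ => ?_⟩
  · rw [Fintype.sum_prod_type]
    refine (Finset.sum_congr rfl fun g _ => ?_).trans (htileA z.1)
    rw [← sum_indicator_iUnion_fibre_mul_eq_indicator A t htileB g z.2, Finset.sum_mul]
    exact Finset.sum_congr rfl fun _ _ => by ring
  · simp only [Complex.ofReal_mul]
    rw [Fintype.sum_prod_mul_mul_mul (fun g => (wA g : ℂ)) γ (fun h => (wB h : ℂ)) ρ]
    exact mul_nonneg (hwAft γ) (hwBft ρ)
end

section
/- Let G and H be finite abelian groups, B ⊆ H a set that does not tile H, and X ⊆ G × H a set such that X ∩ ({g} × H) is, for every g in the projection of X to G, equal to {g} × (h_g + B) for some h_g ∈ H. If X tiles G × H with translation set M, then the sets {x_m + B}, taken over those m ∈ M for which (X + m) ∩ ({0} × H) ≠ ∅, would tile H — a contradiction. Hence X does not tile G × H. -/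
/-!
Slice a tiling of `G × H` by `X` along the coset `{0} × H`: the translate `X + m` meets that
coset in `{0} × (m.2 + X_{-m.1})`, where `X_g` is the fiber of `X` over `g`. These slices
partition `H`, and each nonempty one is a translate of `B`, so `B` would tile `H`.
-/

open Set

/-- The translates `m + A`, `m ∈ M`, partition `α`. -/
def IsTiling {α : Type*} [AddGroup α] (A M : Set α) : Prop :=
  ∀ x, ∃! m, m ∈ M ∧ x - m ∈ A

section

variable {G H : Type*} [AddCommGroup G] [AddCommGroup H]

def fiber (X : Set (G × H)) (g : G) : Set H := {h | (g, h) ∈ X}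

theorem IsTiling.existsUnique_sub_mem_fiber {X M : Set (G × H)} (hM : IsTiling X M) (x : H) :
    ∃! m, m ∈ M ∧ x - m.2 ∈ fiber X (-m.1) := by
  have hsub : ∀ m : G × H, ((0 : G), x) - m = (-m.1, x - m.2) := fun m => by ext <;> simp
  have h := hM (0, x)
  simp only [hsub] at h
  exact h

theorem isTiling_image_of_existsUnique {ι : Type*} {A : Set H} {I : Set ι} {t : ι → H}
    (h : ∀ x, ∃! i, i ∈ I ∧ x - t i ∈ A) : IsTiling A (t '' I) := by
  intro x
  obtain ⟨i, hi, huniq⟩ := h x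
  refine ⟨t i, ⟨mem_image_of_mem t hi.1, hi.2⟩, ?_⟩
  rintro _ ⟨⟨j, hj, rfl⟩, hjA⟩
  rw [huniq j ⟨hj, hjA⟩]

theorem mem_iff_nonempty_and_sub_mem {S B : Set H} {c : H}
    (hS : S.Nonempty → S = (c + ·) '' B) (y : H) : y ∈ S ↔ S.Nonempty ∧ y - c ∈ B := by
  refine ⟨fun hy => ⟨⟨y, hy⟩, ?_⟩, fun ⟨hne, hyB⟩ => ?_⟩
  · have hy' : y ∈ (c + ·) '' B := hS ⟨y, hy⟩ ▸ hy
    obtain ⟨b, hb, rfl⟩ := hy'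
    simpa using hb
  · rw [hS hne]
    exact ⟨y - c, hyB, add_sub_cancel c y⟩

end

theorem not_tile_of_fibers_translates_general
    {G H : Type*} [AddCommGroup G] [AddCommGroup H]
    (B : Set H)
    (hB : ¬ ∃ M : Set H, ∀ x : H, ∃! m, m ∈ M ∧ x - m ∈ B)
    (X : Set (G × H))
    (hfib : ∀ g : G, (∃ h : H, (g, h) ∈ X) →
      ∃ hg : H, {h : H | (g, h) ∈ X} = (hg + ·) '' B) :
    ¬ ∃ M : Set (G × H), ∀ z : G × H, ∃! m, m ∈ M ∧ z - m ∈ X := by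
  rintro ⟨M, hM⟩
  choose! c hc using hfib
  refine hB ⟨_, isTiling_image_of_existsUnique (A := B)
    (I := {m ∈ M | (fiber X (-m.1)).Nonempty}) (t := fun m => m.2 + c (-m.1)) fun x => ?_⟩
  refine (existsUnique_congr fun m => ?_).mp (IsTiling.existsUnique_sub_mem_fiber hM x)
  rw [mem_iff_nonempty_and_sub_mem (S := fiber X (-m.1)) (hc (-m.1)), sub_sub,
    mem_ofPred_eq, and_assoc]

/-- Let `B ⊆ H` be a set that does not tile the finite abelian group `H`, and let
`X ⊆ G × H` be a set each of whose nonempty `G`-fibers is a translate of `B`. Then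
`X` does not tile `G × H` by translations. -/
theorem not_tile_of_fibers_translates
    {G H : Type*} [AddCommGroup G] [AddCommGroup H] [Fintype G] [Fintype H]
    (B : Set H)
    (hB : ¬ ∃ M : Set H, ∀ x : H, ∃! m, m ∈ M ∧ x - m ∈ B)
    (X : Set (G × H))
    (hfib : ∀ g : G, (∃ h : H, (g, h) ∈ X) →
      ∃ hg : H, {h : H | (g, h) ∈ X} = (hg + ·) '' B) :
    ¬ ∃ M : Set (G × H), ∀ z : G × H, ∃! m, m ∈ M ∧ z - m ∈ X :=
  not_tile_of_fibers_translates_general B hB X hfib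
end
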